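/- Let f^1, …, f^n be bounded measurable functions on a probability space, let c be a fixed cyclic permutation (i_1, …, i_p) of a p-element subset {i_1,…,i_p} ⊆ {1,…,n}, and let {j_1, j_2, …} = {1,…,n} \ {i_1,…,i_p}. Let S^c be the set of permutations σ ∈ S_n whose cycle decomposition contains c (i.e. σ agrees with c on {i_1,…,i_p} and permutes the complement). Then P_c := Σ_{σ ∈ S^c} (−1)^{C_σ − 1} E_σ(f^1, …, f^n) equals −E(f^{i_1} ⋯ f^{i_p}) · E_{n−p}(f^{j_1}, f^{j_2}, …) if p < n, and equals E(f^1 ⋯ f^n) if p = n. -/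

import Mathlib

open MeasureTheory

/-- The orbits (cycles, counting fixed points as 1-cycles) of a permutation `σ`
of a finite index type, as a finset of finsets. -/
def permOrbits {ι : Type*} [Fintype ι] [DecidableEq ι] (σ : Equiv.Perm ι) : Finset (Finset ι) :=
  Finset.univ.image fun x => Finset.univ.filter fun y => σ.SameCycle x y

/-- `E_σ(f¹,…,fⁿ) = ∏_{O orbit of σ} E(∏_{i ∈ O} fⁱ)`, the expectation being the
integral with respect to `μ`. -/
noncomputable def permE {Ω : Type*} [MeasurableSpace Ω] (μ : Measure Ω)
    {ι : Type*} [Fintype ι] [DecidableEq ι] (f : ι → Ω → ℝ) (σ : Equiv.Perm ι) : ℝ :=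
  ∏ O ∈ permOrbits σ, ∫ ω, (∏ i ∈ O, f i ω) ∂μ

/-- Sahi's functional `E_n(f¹,…,fⁿ) = ∑_{σ ∈ S_n} (−1)^{C_σ − 1} E_σ(f¹,…,fⁿ)`,
where `C_σ` is the number of orbits of `σ`. -/
noncomputable def En {Ω : Type*} [MeasurableSpace Ω] (μ : Measure Ω)
    {ι : Type*} [Fintype ι] [DecidableEq ι] (f : ι → Ω → ℝ) : ℝ :=
  ∑ σ : Equiv.Perm ι, (-1 : ℝ) ^ ((permOrbits σ).card - 1) * permE μ f σ

section Aux
variable {ι : Type*} [Fintype ι] [DecidableEq ι] {σ c : Equiv.Perm ι} {K : Finset ι}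

/-- a permutation mapping K into K preserves K. -/
lemma stab_iff (h : ∀ x ∈ K, σ x ∈ K) : ∀ x, x ∈ K ↔ σ x ∈ K := by
  have himg : K.image σ = K := by
    apply Finset.eq_of_subset_of_card_le
    · intro y hy; obtain ⟨x, hx, rfl⟩ := Finset.mem_image.1 hy; exact h x hx
    · rw [Finset.card_image_of_injective _ σ.injective]
  intro x
  constructor
  · exact h x
  · intro hx
    rw [← himg] at hx
    obtain ⟨y, hy, hxy⟩ := Finset.mem_image.1 hx
    rwa [← σ.injective hxy]

lemma c_stab (hcfix : ∀ x ∉ K, c x = x) : ∀ x ∈ K, c x ∈ K := by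
  intro x hx
  by_contra h
  have h2 : c x = x := c.injective (hcfix (c x) h)
  rw [h2] at h; exact h hx

lemma sigma_pow_eq (hcfix : ∀ x ∉ K, c x = x) (hσ : ∀ x ∈ K, σ x = c x) :
    ∀ (k : ℕ), ∀ x ∈ K, (σ ^ k) x = (c ^ k) x := by
  intro k
  induction k with
  | zero => simp
  | succ k ih =>
    intro x hx
    have h1 : σ x = c x := hσ x hx
    have h2 : c x ∈ K := c_stab hcfix x hx
    rw [pow_succ, pow_succ, Equiv.Perm.mul_apply, Equiv.Perm.mul_apply, h1, ih _ h2]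

lemma pow_stab_iff (h : ∀ x, x ∈ K ↔ σ x ∈ K) (k : ℕ) : ∀ x, x ∈ K ↔ (σ ^ k) x ∈ K := by
  induction k with
  | zero => simp
  | succ k ih =>
    intro x
    rw [pow_succ, Equiv.Perm.mul_apply]
    exact (h x).trans (ih (σ x))

/-- The orbit of a point of K under σ (agreeing with c on K) is K itself. -/
lemma orbit_in_K (hcfix : ∀ x ∉ K, c x = x) (hccyc : ∀ x ∈ K, ∀ y ∈ K, c.SameCycle x y)
    (hσ : ∀ x ∈ K, σ x = c x) {x : ι} (hx : x ∈ K) :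
    (Finset.univ.filter fun y => σ.SameCycle x y) = K := by
  have hst : ∀ z, z ∈ K ↔ σ z ∈ K :=
    stab_iff (fun z hz => (hσ z hz) ▸ c_stab hcfix z hz)
  ext y
  simp only [Finset.mem_filter, Finset.mem_univ, true_and]
  constructor
  · rintro hsc
    obtain ⟨k, _, hk⟩ := hsc.exists_pow_eq'
    rw [← hk]
    exact ((pow_stab_iff hst k x).1 hx)
  · intro hy
    obtain ⟨k, _, hk⟩ := (hccyc x hx y hy).exists_pow_eq'
    exact ⟨(k : ℤ), by rw [zpow_natCast, sigma_pow_eq hcfix hσ k x hx]; exact hk⟩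

lemma orbit_off_K (hst : ∀ z, z ∈ K ↔ σ z ∈ K) {x y : ι} (hx : x ∉ K)
    (h : σ.SameCycle x y) : y ∉ K := by
  obtain ⟨k, _, hk⟩ := h.exists_pow_eq'
  rw [← hk]
  exact fun hc => hx ((pow_stab_iff hst k x).2 hc)

lemma compl_stab (hst : ∀ z, z ∈ K ↔ σ z ∈ K) : ∀ z, σ z ∈ Kᶜ ↔ z ∈ Kᶜ := by
  intro z; simp only [Finset.mem_compl]; exact not_iff_not.2 (hst z).symm

lemma sameCycle_subtype (hst : ∀ z, z ∈ K ↔ σ z ∈ K) (a b : {x // x ∈ Kᶜ}) :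
    (σ.subtypePerm (compl_stab hst)).SameCycle a b ↔ σ.SameCycle a.val b.val := by
  constructor
  · rintro ⟨k, hk⟩
    refine ⟨k, ?_⟩
    have := congrArg Subtype.val hk
    rwa [Equiv.Perm.subtypePerm_apply_zpow_of_mem (compl_stab hst) a.prop] at this
  · rintro ⟨k, hk⟩
    refine ⟨k, ?_⟩
    apply Subtype.ext
    rw [Equiv.Perm.subtypePerm_apply_zpow_of_mem (compl_stab hst) a.prop]
    exact hk

end Aux

section Aux2
set_option linter.unusedSectionVars false
variable {ι : Type*} [Fintype ι] [DecidableEq ι] {σ c : Equiv.Perm ι} {K : Finset ι}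

lemma permOrbits_decomp (hK : K.Nonempty) (hcfix : ∀ x ∉ K, c x = x)
    (hccyc : ∀ x ∈ K, ∀ y ∈ K, c.SameCycle x y) (hσ : ∀ x ∈ K, σ x = c x)
    (hst : ∀ z, z ∈ K ↔ σ z ∈ K) :
    permOrbits σ = insert K ((permOrbits (σ.subtypePerm (compl_stab hst))).image
      (Finset.map (Function.Embedding.subtype _))) := by
  have key : ∀ x : {y // y ∈ Kᶜ},
      (Finset.univ.filter fun y => σ.SameCycle x.val y) =
      (Finset.univ.filter fun b => (σ.subtypePerm (compl_stab hst)).SameCycle x b).map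
        (Function.Embedding.subtype _) := by
    intro x
    ext y
    simp only [Finset.mem_filter, Finset.mem_univ, true_and, Finset.mem_map,
      Function.Embedding.coe_subtype]
    constructor
    · intro h
      have hy : y ∈ Kᶜ := Finset.mem_compl.2 (orbit_off_K hst (Finset.mem_compl.1 x.prop) h)
      exact ⟨⟨y, hy⟩, (sameCycle_subtype hst x ⟨y, hy⟩).2 h, rfl⟩
    · rintro ⟨b, hb, rfl⟩
      exact (sameCycle_subtype hst x b).1 hb
  ext O
  simp only [permOrbits, Finset.mem_insert, Finset.mem_image, Finset.mem_univ, true_and]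
  constructor
  · rintro ⟨x, rfl⟩
    by_cases hx : x ∈ K
    · left; exact orbit_in_K hcfix hccyc hσ hx
    · right
      exact ⟨Finset.univ.filter fun b =>
        (σ.subtypePerm (compl_stab hst)).SameCycle ⟨x, Finset.mem_compl.2 hx⟩ b,
        ⟨⟨x, Finset.mem_compl.2 hx⟩, rfl⟩, (key ⟨x, Finset.mem_compl.2 hx⟩).symm⟩
  · rintro (rfl | ⟨O', ⟨a, rfl⟩, rfl⟩)
    · obtain ⟨x, hx⟩ := hK
      exact ⟨x, orbit_in_K hcfix hccyc hσ hx⟩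
    · exact ⟨a.val, key a⟩

lemma K_not_mem_image (hK : K.Nonempty) (s : Finset (Finset {x // x ∈ Kᶜ})) :
    K ∉ s.image (Finset.map (Function.Embedding.subtype (fun x => x ∈ Kᶜ))) := by
  intro h
  obtain ⟨O', _, hO'⟩ := Finset.mem_image.1 h
  obtain ⟨x, hx⟩ := hK
  have hx' := hx
  rw [← hO', Finset.mem_map] at hx'
  obtain ⟨b, _, hb⟩ := hx'
  exact Finset.mem_compl.1 (hb ▸ b.prop) hx

end Aux2

section Aux3
set_option linter.unusedSectionVars false
variable {ι : Type*} [Fintype ι] [DecidableEq ι] {σ c : Equiv.Perm ι} {K : Finset ι}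

lemma permOrbits_card_pos (σ : Equiv.Perm ι) [Nonempty ι] : 0 < (permOrbits σ).card := by
  rw [Finset.card_pos, permOrbits]
  exact (Finset.univ_nonempty).image _

lemma card_decomp (hK : K.Nonempty) (hcfix : ∀ x ∉ K, c x = x)
    (hccyc : ∀ x ∈ K, ∀ y ∈ K, c.SameCycle x y) (hσ : ∀ x ∈ K, σ x = c x)
    (hst : ∀ z, z ∈ K ↔ σ z ∈ K) :
    (permOrbits σ).card = (permOrbits (σ.subtypePerm (compl_stab hst))).card + 1 := by
  rw [permOrbits_decomp hK hcfix hccyc hσ hst,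
    Finset.card_insert_of_notMem (K_not_mem_image hK _),
    Finset.card_image_of_injective _ (Finset.map_injective _)]

lemma permE_decomp {Ω : Type*} [MeasurableSpace Ω] (μ : Measure Ω) (f : ι → Ω → ℝ)
    (hK : K.Nonempty) (hcfix : ∀ x ∉ K, c x = x)
    (hccyc : ∀ x ∈ K, ∀ y ∈ K, c.SameCycle x y) (hσ : ∀ x ∈ K, σ x = c x)
    (hst : ∀ z, z ∈ K ↔ σ z ∈ K) :
    permE μ f σ = (∫ ω, (∏ i ∈ K, f i ω) ∂μ) *
      permE μ (fun j : {x // x ∈ Kᶜ} => f j.val) (σ.subtypePerm (compl_stab hst)) := by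
  rw [permE, permOrbits_decomp hK hcfix hccyc hσ hst,
    Finset.prod_insert (K_not_mem_image hK _),
    Finset.prod_image (fun a _ b _ h => Finset.map_injective _ h)]
  congr 1
  refine Finset.prod_congr rfl fun O _ => ?_
  congr 1
  ext ω
  rw [Finset.prod_map]
  rfl

lemma orbit_univ (hK : (Finset.univ : Finset ι).Nonempty)
    (hccyc : ∀ x y : ι, c.SameCycle x y) :
    permOrbits c = {Finset.univ} := by
  have : ∀ x : ι, (Finset.univ.filter fun y => c.SameCycle x y) = Finset.univ := by
    intro x; ext y; simp [hccyc x y]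
  rw [permOrbits]
  rw [Finset.image_congr (fun x _ => this x)]
  exact Finset.image_const hK _

end Aux3

/-- Let `c` be a permutation which is a single cycle `(i₁,…,i_p)` on a
nonempty subset `K = {i₁,…,i_p}` of `{1,…,n}` and the identity off `K`, and let `S^c` be
the set of permutations `σ ∈ S_n` whose cycle decomposition contains `c` (i.e. `σ` agrees
with `c` on `K`).  Then `P_c = ∑_{σ ∈ S^c} (−1)^{C_σ−1} E_σ(f¹,…,fⁿ)` equals
`−E(f^{i₁}⋯f^{i_p})·E_{n−p}(f^{j₁},f^{j₂},…)` if `p < n` (the `j`'s being the complement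
of `K`), and equals `E(f¹⋯fⁿ)` if `p = n`. -/
theorem stmt_8 {Ω : Type*} [MeasurableSpace Ω] (μ : Measure Ω) [IsProbabilityMeasure μ]
    (n : ℕ) (f : Fin n → Ω → ℝ)
    (hmeas : ∀ i, Measurable (f i)) (hbdd : ∀ i, ∃ C, ∀ ω, |f i ω| ≤ C)
    (K : Finset (Fin n)) (hK : K.Nonempty) (c : Equiv.Perm (Fin n))
    (hcfix : ∀ x ∉ K, c x = x)
    (hccyc : ∀ x ∈ K, ∀ y ∈ K, c.SameCycle x y) :
    (K ≠ Finset.univ →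
      ∑ σ ∈ Finset.univ.filter (fun σ : Equiv.Perm (Fin n) => ∀ x ∈ K, σ x = c x),
          (-1 : ℝ) ^ ((permOrbits σ).card - 1) * permE μ f σ
        = -(∫ ω, (∏ i ∈ K, f i ω) ∂μ) * En μ (fun j : ↥(Kᶜ) => f j.val)) ∧
    (K = Finset.univ →
      ∑ σ ∈ Finset.univ.filter (fun σ : Equiv.Perm (Fin n) => ∀ x ∈ K, σ x = c x),
          (-1 : ℝ) ^ ((permOrbits σ).card - 1) * permE μ f σ
        = ∫ ω, (∏ i, f i ω) ∂μ) := by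
  constructor
  · intro hKne
    have hcompl : (Kᶜ : Finset (Fin n)).Nonempty :=
      Finset.nonempty_iff_ne_empty.2 fun h => hKne (by rwa [Finset.compl_eq_empty_iff] at h)
    have : Nonempty {x : Fin n // x ∈ Kᶜ} := ⟨⟨hcompl.choose, hcompl.choose_spec⟩⟩
    have hstab : ∀ σ ∈ Finset.univ.filter
        (fun σ : Equiv.Perm (Fin n) => ∀ x ∈ K, σ x = c x),
        ∀ z, z ∈ K ↔ σ z ∈ K := fun σ hσ =>
      stab_iff (fun x hx => ((Finset.mem_filter.1 hσ).2 x hx) ▸ c_stab hcfix x hx)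
    rw [En, Finset.mul_sum]
    refine Finset.sum_bij'
      (fun σ hσ => σ.subtypePerm (compl_stab (hstab σ hσ)))
      (fun τ _ => c * Equiv.Perm.ofSubtype τ)
      (fun _ _ => Finset.mem_univ _)
      (fun τ _ => Finset.mem_filter.2 ⟨Finset.mem_univ _, fun x hx => by
        rw [Equiv.Perm.mul_apply,
          Equiv.Perm.ofSubtype_apply_of_not_mem τ (by simp [hx])]⟩)
      (fun σ hσ => ?_) (fun τ _ => ?_) (fun σ hσ => ?_)
    · -- left inverse
      apply Equiv.ext
      intro x
      by_cases hx : x ∈ K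
      · rw [Equiv.Perm.mul_apply,
          Equiv.Perm.ofSubtype_apply_of_not_mem _ (by simp [hx])]
        exact ((Finset.mem_filter.1 hσ).2 x hx).symm
      · have hx' : x ∈ Kᶜ := Finset.mem_compl.2 hx
        rw [Equiv.Perm.mul_apply, Equiv.Perm.ofSubtype_apply_of_mem _ hx']
        simp only [Equiv.Perm.subtypePerm_apply]
        exact hcfix (σ x) (fun h => hx ((hstab σ hσ x).2 h))
    · -- right inverse
      apply Equiv.ext
      intro a
      apply Subtype.ext
      rw [Equiv.Perm.subtypePerm_apply]
      show (c * Equiv.Perm.ofSubtype τ) a.val = _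
      rw [Equiv.Perm.mul_apply, Equiv.Perm.ofSubtype_apply_of_mem _ a.prop]
      exact hcfix _ (Finset.mem_compl.1 (τ a).prop)
    · -- equality of summands
      have hσ' := (Finset.mem_filter.1 hσ).2
      have hst := hstab σ hσ
      rw [card_decomp hK hcfix hccyc hσ' hst, permE_decomp μ f hK hcfix hccyc hσ' hst,
        Nat.add_sub_cancel]
      have hpos := permOrbits_card_pos (σ.subtypePerm (compl_stab hst))
      rw [← Nat.succ_pred_eq_of_pos hpos, pow_succ]
      simp only [Nat.succ_sub_one]
      ring
  · intro hKu
    subst hKu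
    have hset : Finset.univ.filter
        (fun σ : Equiv.Perm (Fin n) => ∀ x ∈ (Finset.univ : Finset (Fin n)), σ x = c x)
        = {c} := by
      ext σ
      simp only [Finset.mem_filter, Finset.mem_singleton]
      constructor
      · rintro ⟨-, h⟩; exact Equiv.ext fun x => h x (Finset.mem_univ x)
      · rintro rfl; exact ⟨Finset.mem_univ _, fun x _ => rfl⟩
    rw [hset, Finset.sum_singleton, permE,
      orbit_univ hK (fun x y => hccyc x (Finset.mem_univ x) y (Finset.mem_univ y))]
    simp
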